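/- arXiv:1702.02879 — 3 statements merged into one kernel-verified Lean document; each statement's English description precedes it below -/
import Mathlib

section
/- Let a, b, c, d, e, f ∈ ℝ, M = [[1-a-b, a, b], [c, 1-c-d, d], [e, f, 1-e-f]], s = a+b+c+d+e+f, p = ad+ae+af+bc+bd+bf+ce+cf+de, and suppose Δ = s^2 - 4p > 0. Let x_1 = (2-s-√Δ)/2 and x_2 = (2-s+√Δ)/2, and suppose x_1 ≠ 1 and x_2 ≠ 1. For i = 1, 2 and n ∈ ℕ, set X_i(n) = (x_i^n - 1)/(x_i - 1), and define a_n = (X_2(n) - X_1(n))/√Δ, b_n = ((x_2 + 1)X_1(n) - (x_1 + 1)X_2(n))/√Δ, and c_n = 1 + (x_1 X_2(n) - x_2 X_1(n))/√Δ. Then for every n ≥ 1, M^n = a_n·M^2 + b_n·M + c_n·I_3. -/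
/-!
By Cayley–Hamilton, `M` is annihilated by its characteristic polynomial
`(X - 1)(X - x₁)(X - x₂)`, whose three roots are distinct. The quadratic
`aₙ X² + bₙ X + cₙ` interpolates `Xⁿ` at `1, x₁, x₂`, so `Xⁿ - (aₙ X² + bₙ X + cₙ)` is
divisible by the characteristic polynomial and therefore vanishes at `M`.
-/

open Matrix Polynomial

theorem Polynomial.prod_X_sub_C_dvd_of_forall_isRoot {K : Type*} [Field K] {s : Finset K}
    {q : K[X]} (h : ∀ r ∈ s, q.IsRoot r) : ∏ r ∈ s, (X - C r) ∣ q :=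
  Finset.prod_dvd_of_coprime
    (fun _ _ _ _ hab => pairwise_coprime_X_sub_C Function.injective_id hab)
    fun r hr => dvd_iff_isRoot.2 (h r hr)

theorem Polynomial.aeval_eq_of_forall_eval_eq {K A : Type*} [Field K] [Ring A] [Algebra K A]
    {m : A} {s : Finset K} (hm : aeval m (∏ r ∈ s, (X - C r)) = 0) {p q : K[X]}
    (hpq : ∀ r ∈ s, p.eval r = q.eval r) : aeval m p = aeval m q := by
  rw [← sub_eq_zero, ← map_sub]
  refine aeval_eq_zero_of_dvd_aeval_eq_zero (prod_X_sub_C_dvd_of_forall_isRoot fun r hr => ?_) hm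
  simp [hpq r hr]

theorem Matrix.charpoly_fin_three_of_row_sum_eq_one {R : Type*} [CommRing R] {a b c d e f s p : R}
    (hs : s = a + b + c + d + e + f)
    (hp : p = a*d + a*e + a*f + b*c + b*d + b*f + c*e + c*f + d*e) :
    (!![1 - a - b, a, b; c, 1 - c - d, d; e, f, 1 - e - f]).charpoly =
      (X - 1) * (X ^ 2 + C (s - 2) * X + C (1 - s + p)) := by
  subst hs hp
  rw [Matrix.charpoly, det_fin_three]
  simp [map_ofNat C 2]
  ring

theorem stmt_11 (a b c d e f s p x1 x2 : ℝ) (X1 X2 an bn cn : ℕ → ℝ)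
    (M : Matrix (Fin 3) (Fin 3) ℝ)
    (hM : M = !![1 - a - b, a, b; c, 1 - c - d, d; e, f, 1 - e - f])
    (hs : s = a + b + c + d + e + f)
    (hp : p = a*d + a*e + a*f + b*c + b*d + b*f + c*e + c*f + d*e)
    (hΔ : s ^ 2 - 4 * p > 0)
    (hx1 : x1 = (2 - s - Real.sqrt (s ^ 2 - 4 * p)) / 2)
    (hx2 : x2 = (2 - s + Real.sqrt (s ^ 2 - 4 * p)) / 2)
    (hx1ne : x1 ≠ 1) (hx2ne : x2 ≠ 1)
    (hX1 : ∀ n : ℕ, X1 n = (x1 ^ n - 1) / (x1 - 1))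
    (hX2 : ∀ n : ℕ, X2 n = (x2 ^ n - 1) / (x2 - 1))
    (han : ∀ n : ℕ, an n = (X2 n - X1 n) / Real.sqrt (s ^ 2 - 4 * p))
    (hbn : ∀ n : ℕ, bn n =
      ((x2 + 1) * X1 n - (x1 + 1) * X2 n) / Real.sqrt (s ^ 2 - 4 * p))
    (hcn : ∀ n : ℕ, cn n = 1 + (x1 * X2 n - x2 * X1 n) / Real.sqrt (s ^ 2 - 4 * p)) :
    ∀ n : ℕ, 1 ≤ n →
      M ^ n = an n • M ^ 2 + bn n • M + cn n • (1 : Matrix (Fin 3) (Fin 3) ℝ) := by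
  intro n _
  set D := Real.sqrt (s ^ 2 - 4 * p)
  have hD : x2 - x1 = D := by rw [hx1, hx2]; ring
  have hx12 : x1 ≠ x2 := by linarith [Real.sqrt_pos.2 hΔ]
  have hvieta : X ^ 2 + C (s - 2) * X + C (1 - s + p) = (X - C x1) * (X - C x2) := by
    have hsum : x1 + x2 = 2 - s := by rw [hx1, hx2]; ring
    have hprod : x1 * x2 = 1 - s + p := by
      rw [hx1, hx2]; linear_combination (-1/4 : ℝ) * Real.sq_sqrt hΔ.le
    rw [← hprod, show s - 2 = -(x1 + x2) by linarith]
    simp only [map_neg, map_add, map_mul]; ring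
  have hχ : aeval M (∏ r ∈ {1, x1, x2}, (X - C r)) = 0 := by
    rw [Finset.prod_insert (by simp [hx1ne.symm, hx2ne.symm]), Finset.prod_pair hx12, C_1,
      ← hvieta, ← charpoly_fin_three_of_row_sum_eq_one hs hp, hM]
    exact aeval_self_charpoly _
  have hinterp : ∀ r ∈ ({1, x1, x2} : Finset ℝ), r ^ n = an n * r ^ 2 + bn n * r + cn n := by
    have h1 : x1 - 1 ≠ 0 := sub_ne_zero.2 hx1ne
    have h2 : x2 - 1 ≠ 0 := sub_ne_zero.2 hx2ne
    have hD0 : D ≠ 0 := by rw [← hD]; exact sub_ne_zero.2 hx12.symm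
    simp only [Finset.mem_insert, Finset.mem_singleton]
    rintro r (rfl | rfl | rfl) <;> rw [han, hbn, hcn, hX1, hX2, ← hD] <;> field_simp <;> ring
  have hpow := aeval_eq_of_forall_eval_eq hχ (p := X ^ n)
    (q := C (an n) * X ^ 2 + C (bn n) * X + C (cn n))
    (by simpa using hinterp)
  simpa [Algebra.smul_def] using hpow
end

section
/- Let a, b, c, d, e, f ∈ ℝ, M = [[1-a-b, a, b], [c, 1-c-d, d], [e, f, 1-e-f]], s = a+b+c+d+e+f, p = ad+ae+af+bc+bd+bf+ce+cf+de, and suppose Δ = s^2 - 4p > 0 and that the roots x_1 = (2-s-√Δ)/2, x_2 = (2-s+√Δ)/2 satisfy |x_1| < 1 and |x_2| < 1. Then the matrix powers M^n converge as n → ∞ to the matrix (1/p)·(M^2 + (s-2)·M + (1-s+p)·I_3). -/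
open Matrix Filter

set_option maxHeartbeats 2000000 in
theorem stmt_13 (a b c d e f s p x1 x2 : ℝ)
    (M : Matrix (Fin 3) (Fin 3) ℝ)
    (hM : M = !![1 - a - b, a, b; c, 1 - c - d, d; e, f, 1 - e - f])
    (hs : s = a + b + c + d + e + f)
    (hp : p = a*d + a*e + a*f + b*c + b*d + b*f + c*e + c*f + d*e)
    (hΔ : s ^ 2 - 4 * p > 0)
    (hx1 : x1 = (2 - s - Real.sqrt (s ^ 2 - 4 * p)) / 2)
    (hx2 : x2 = (2 - s + Real.sqrt (s ^ 2 - 4 * p)) / 2)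
    (hx1lt : |x1| < 1) (hx2lt : |x2| < 1) :
    Tendsto (fun n : ℕ => M ^ n) atTop
      (nhds ((1 / p) • (M ^ 2 + (s - 2) • M +
        (1 - s + p) • (1 : Matrix (Fin 3) (Fin 3) ℝ)))) := by
  -- Cayley–Hamilton for M
  have CH : M * M * M = (3 - s) • (M * M) - (3 - 2*s + p) • M
      + (1 - s + p) • (1 : Matrix (Fin 3) (Fin 3) ℝ) := by
    subst hM hs hp
    rw [Matrix.mul_fin_three, Matrix.mul_fin_three, Matrix.one_fin_three]
    ext i j
    fin_cases i <;> fin_cases j <;> simp [Matrix.vecHead, Matrix.vecTail] <;> ring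
  -- basic facts about the roots
  have hr2 : Real.sqrt (s ^ 2 - 4 * p) ^ 2 = s ^ 2 - 4 * p := Real.sq_sqrt hΔ.le
  have hrpos : 0 < Real.sqrt (s ^ 2 - 4 * p) := Real.sqrt_pos.mpr hΔ
  have hsum : x1 + x2 = 2 - s := by rw [hx1, hx2]; ring
  have hprod : x1 * x2 = 1 - s + p := by
    rw [hx1, hx2]
    have : (2 - s - Real.sqrt (s ^ 2 - 4 * p)) / 2 * ((2 - s + Real.sqrt (s ^ 2 - 4 * p)) / 2)
        = ((2 - s)^2 - Real.sqrt (s ^ 2 - 4 * p) ^ 2) / 4 := by ring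
    rw [this, hr2]; ring
  have hx1ne1 : x1 ≠ 1 := ne_of_lt (abs_lt.mp hx1lt).2
  have hx2ne1 : x2 ≠ 1 := ne_of_lt (abs_lt.mp hx2lt).2
  have hne : x1 ≠ x2 := by
    rw [hx1, hx2]; intro h
    have := sub_eq_zero.mpr h
    simp only [div_sub_div_same] at this
    nlinarith [hrpos]
  have hpfact : p = (1 - x1) * (1 - x2) := by
    have h : (1 - x1) * (1 - x2) = 1 - (x1 + x2) + x1 * x2 := by ring
    rw [h, hsum, hprod]; ring
  have hpne : p ≠ 0 := by
    rw [hpfact]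
    exact mul_ne_zero (sub_ne_zero.mpr (Ne.symm hx1ne1)) (sub_ne_zero.mpr (Ne.symm hx2ne1))
  have h1x1 : (1 : ℝ) - x1 ≠ 0 := sub_ne_zero.mpr (Ne.symm hx1ne1)
  have h1x2 : (1 : ℝ) - x2 ≠ 0 := sub_ne_zero.mpr (Ne.symm hx2ne1)
  have hx12 : x1 - x2 ≠ 0 := sub_ne_zero.mpr hne
  -- the three spectral components
  set A : Matrix (Fin 3) (Fin 3) ℝ :=
    (1 / p) • (M ^ 2 + (s - 2) • M + (1 - s + p) • (1 : Matrix (Fin 3) (Fin 3) ℝ)) with hA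
  set B : Matrix (Fin 3) (Fin 3) ℝ :=
    ((x1 - 1) * (x1 - x2))⁻¹ • (M * M - (1 + x2) • M + x2 • (1 : Matrix (Fin 3) (Fin 3) ℝ)) with hB
  set C : Matrix (Fin 3) (Fin 3) ℝ :=
    ((x2 - 1) * (x2 - x1))⁻¹ • (M * M - (1 + x1) • M + x1 • (1 : Matrix (Fin 3) (Fin 3) ℝ)) with hC
  have hsq : M ^ 2 = M * M := sq M
  -- M fixes A
  have hMA : M * A = A := by
    rw [hA, hsq]
    rw [Matrix.mul_smul]
    congr 1
    rw [Matrix.mul_add, Matrix.mul_add, Matrix.mul_smul, Matrix.mul_smul, Matrix.mul_one,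
      ← mul_assoc, CH]
    module
  -- M scales B by x1
  have hMB : M * B = x1 • B := by
    rw [hB, Matrix.mul_smul, smul_comm]
    congr 1
    rw [Matrix.mul_add, Matrix.mul_sub, Matrix.mul_smul, Matrix.mul_smul, Matrix.mul_one,
      ← mul_assoc, CH]
    match_scalars
    · linarith [hsum, hprod]
    · linarith [hsum, hprod]
    · linarith [hsum, hprod]
  -- M scales C by x2
  have hMC : M * C = x2 • C := by
    rw [hC, Matrix.mul_smul, smul_comm]
    congr 1
    rw [Matrix.mul_add, Matrix.mul_sub, Matrix.mul_smul, Matrix.mul_smul, Matrix.mul_one,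
      ← mul_assoc, CH]
    match_scalars
    · linarith [hsum, hprod]
    · linarith [hsum, hprod]
    · linarith [hsum, hprod]
  -- Lagrange decomposition of the identity
  have hd1 : x1 - 1 ≠ 0 := sub_ne_zero.mpr hx1ne1
  have hd2 : x2 - 1 ≠ 0 := sub_ne_zero.mpr hx2ne1
  have hx21 : x2 - x1 ≠ 0 := sub_ne_zero.mpr (Ne.symm hne)
  have hABC : A + B + C = 1 := by
    have e1 : 1/((1-x1)*(1-x2)) + ((x1-1)*(x1-x2))⁻¹ + ((x2-1)*(x2-x1))⁻¹ = 0 := by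
      field_simp
      ring
    have e2 : (1/((1-x1)*(1-x2))) * (-(x1+x2)) + ((x1-1)*(x1-x2))⁻¹ * (-(1+x2))
        + ((x2-1)*(x2-x1))⁻¹ * (-(1+x1)) = 0 := by
      field_simp
      ring
    have e3 : (1/((1-x1)*(1-x2))) * (x1*x2) + ((x1-1)*(x1-x2))⁻¹ * x2
        + ((x2-1)*(x2-x1))⁻¹ * x1 = 1 := by
      field_simp
      ring
    rw [hA, hB, hC, hsq]
    have hs' : s - 2 = -(x1 + x2) := by linarith [hsum]
    rw [hs', ← hprod, hpfact]
    match_scalars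
    · linear_combination e1
    · linear_combination e2
    · linear_combination e3
  -- powers
  have hPA : ∀ n : ℕ, M ^ n * A = A := by
    intro n; induction n with
    | zero => simp
    | succ n ih => rw [pow_succ, mul_assoc, hMA, ih]
  have hPB : ∀ n : ℕ, M ^ n * B = x1 ^ n • B := by
    intro n; induction n with
    | zero => simp
    | succ n ih => rw [pow_succ, mul_assoc, hMB, Matrix.mul_smul, ih, smul_smul, pow_succ, mul_comm]
  have hPC : ∀ n : ℕ, M ^ n * C = x2 ^ n • C := by
    intro n; induction n with
    | zero => simp
    | succ n ih => rw [pow_succ, mul_assoc, hMC, Matrix.mul_smul, ih, smul_smul, pow_succ, mul_comm]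
  have key : ∀ n : ℕ, M ^ n = A + x1 ^ n • B + x2 ^ n • C := by
    intro n
    calc M ^ n = M ^ n * (A + B + C) := by rw [hABC, mul_one]
    _ = A + x1 ^ n • B + x2 ^ n • C := by
        rw [Matrix.mul_add, Matrix.mul_add, hPA n, hPB n, hPC n]
  -- take the limit
  have hB0 : Tendsto (fun n : ℕ => x1 ^ n • B) atTop (nhds 0) := by
    have h := (tendsto_pow_atTop_nhds_zero_of_abs_lt_one hx1lt).smul_const B
    rw [zero_smul] at h
    exact h
  have hC0 : Tendsto (fun n : ℕ => x2 ^ n • C) atTop (nhds 0) := by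
    have h := (tendsto_pow_atTop_nhds_zero_of_abs_lt_one hx2lt).smul_const C
    rw [zero_smul] at h
    exact h
  have : Tendsto (fun n : ℕ => A + x1 ^ n • B + x2 ^ n • C) atTop (nhds (A + 0 + 0)) :=
    (tendsto_const_nhds.add hB0).add hC0
  rw [add_zero, add_zero] at this
  exact this.congr fun n => (key n).symm
end

section
/- Let a, b, c, d, e, f ∈ ℝ, M = [[1-a-b, a, b], [c, 1-c-d, d], [e, f, 1-e-f]], s = a+b+c+d+e+f, p = ad+ae+af+bc+bd+bf+ce+cf+de, and suppose Δ = s^2 - 4p > 0 and that x_1 = (2-s-√Δ)/2 and x_2 = (2-s+√Δ)/2 satisfy |x_1| < 1 and |x_2| < 1. Let P_0 = (P_R(0), P_C(0), P_T(0)) be any probability row vector. Then the sequence P_n = P_0 · M^n of frequency vectors converges as n → ∞, and its limit is P_0 · (1/p)·(M^2 + (s-2)·M + (1-s+p)·I_3). -/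
/-!
By Cayley–Hamilton, `M` is annihilated by `(t - 1)(t - x₁)(t - x₂)`, whose roots are distinct. Sylvester's
formula then writes `M ^ n = E₁ + x₁ ^ n • E_{x₁} + x₂ ^ n • E_{x₂}` with the Frobenius covariants
`E_u`, all independent of `n`. Since `|x₁|, |x₂| < 1`, `M ^ n` tends to
`E₁ = (M - x₁)(M - x₂) / ((1 - x₁)(1 - x₂))`, and `(1 - x₁)(1 - x₂) = 1 - (2 - s) + (1 - s + p) = p`.
-/

open Matrix Filter

section FrobeniusCovariant

variable {𝕜 A : Type*} [Field 𝕜] [Ring A] [Algebra 𝕜 A]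

/-- The Frobenius covariant of `M` at the root `u` of an annihilating polynomial
`(t - u)(t - v)(t - w)`, as in Sylvester's formula. -/
def frobeniusCovariant (M : A) (u v w : 𝕜) : A :=
  ((u - v) * (u - w))⁻¹ • ((M - v • 1) * (M - w • 1))

lemma commute_sub_smul_one (M : A) (u v : 𝕜) : Commute (M - u • (1 : A)) (M - v • 1) :=
  ((Commute.refl M).sub_right ((Commute.one_right M).smul_right v)).sub_left
    ((Commute.one_left _).smul_left u)

lemma sub_smul_one_mul_sub_smul_one (M : A) (u v : 𝕜) :
    (M - u • 1) * (M - v • 1) = M ^ 2 - (u + v) • M + (u * v) • 1 := by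
  simp only [sq, sub_mul, mul_sub, smul_mul_assoc, mul_smul_comm, one_mul, mul_one]
  module

lemma mul_frobeniusCovariant {M : A} {u v w : 𝕜}
    (hM : (M - u • 1) * (M - v • 1) * (M - w • 1) = 0) :
    M * frobeniusCovariant M u v w = u • frobeniusCovariant M u v w := by
  have h : (M - u • 1) * frobeniusCovariant M u v w = 0 := by
    rw [frobeniusCovariant, mul_smul_comm, ← mul_assoc, hM, smul_zero]
  rwa [sub_mul, smul_mul_assoc, one_mul, sub_eq_zero] at h

lemma frobeniusCovariant_add_add {u v w : 𝕜} (huv : u ≠ v) (hvw : v ≠ w) (hwu : w ≠ u) (M : A) :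
    frobeniusCovariant M u v w + frobeniusCovariant M v w u + frobeniusCovariant M w u v = 1 := by
  have huv' := sub_ne_zero.mpr huv
  have hvw' := sub_ne_zero.mpr hvw
  have hwu' := sub_ne_zero.mpr hwu
  simp only [frobeniusCovariant, sub_mul, mul_sub, smul_mul_assoc, mul_smul_comm, one_mul, mul_one,
    smul_sub]
  match_scalars <;> field_simp <;> ring

lemma pow_mul_eq_smul_of_mul_eq_smul {M E : A} {u : 𝕜} (h : M * E = u • E) (n : ℕ) :
    M ^ n * E = u ^ n • E := by
  induction n with
  | zero => simp
  | succ n ih => rw [pow_succ, mul_assoc, h, mul_smul_comm, ih, smul_smul, pow_succ, mul_comm]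

lemma sub_smul_one_mul_rotate {M : A} {u v w : 𝕜}
    (hM : (M - u • 1) * (M - v • 1) * (M - w • 1) = 0) :
    (M - v • 1) * (M - w • 1) * (M - u • 1) = 0 := by
  rw [← ((commute_sub_smul_one M u v).mul_right (commute_sub_smul_one M u w)).eq, ← mul_assoc, hM]

lemma pow_eq_sum_frobeniusCovariant {M : A} {u v w : 𝕜} (huv : u ≠ v) (hvw : v ≠ w)
    (hwu : w ≠ u) (hM : (M - u • 1) * (M - v • 1) * (M - w • 1) = 0) (n : ℕ) :
    M ^ n = u ^ n • frobeniusCovariant M u v w + v ^ n • frobeniusCovariant M v w u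
      + w ^ n • frobeniusCovariant M w u v := by
  have hv := sub_smul_one_mul_rotate hM
  have hw := sub_smul_one_mul_rotate hv
  rw [← mul_one (M ^ n), ← frobeniusCovariant_add_add huv hvw hwu M, mul_add, mul_add,
    pow_mul_eq_smul_of_mul_eq_smul (mul_frobeniusCovariant hM),
    pow_mul_eq_smul_of_mul_eq_smul (mul_frobeniusCovariant hv),
    pow_mul_eq_smul_of_mul_eq_smul (mul_frobeniusCovariant hw)]

lemma tendsto_pow_frobeniusCovariant {K A : Type*} [NormedField K] [Ring A] [Algebra K A]
    [TopologicalSpace A] [ContinuousAdd A] [ContinuousSMul K A] {M : A} {v w : K}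
    (hv1 : v ≠ 1) (hvw : v ≠ w) (hw1 : w ≠ 1) (hv : ‖v‖ < 1) (hw : ‖w‖ < 1)
    (hM : (M - 1) * (M - v • 1) * (M - w • 1) = 0) :
    Tendsto (fun n : ℕ => M ^ n) atTop (nhds (frobeniusCovariant M 1 v w)) := by
  have h1 : (M - (1 : K) • 1) * (M - v • 1) * (M - w • 1) = 0 := by rwa [one_smul]
  have hlim := (((tendsto_pow_atTop_nhds_zero_of_norm_lt_one hv).smul_const
    (frobeniusCovariant M v w 1)).add ((tendsto_pow_atTop_nhds_zero_of_norm_lt_one hw).smul_const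
    (frobeniusCovariant M w 1 v))).const_add (frobeniusCovariant M 1 v w)
  simp only [zero_smul, add_zero] at hlim
  refine hlim.congr fun n => ?_
  rw [pow_eq_sum_frobeniusCovariant hv1.symm hvw hw1 h1 n, one_pow, one_smul, add_assoc]

end FrobeniusCovariant

/-- `(t - 1)(t² - (2 - s)t + (1 - s + p))` is the characteristic polynomial of `M`, so this is
Cayley–Hamilton; the factor `t - 1` comes from the rows of `M` summing to `1`. -/
lemma mutation_matrix_annihilated {a b c d e f s p : ℝ} {M : Matrix (Fin 3) (Fin 3) ℝ}
    (hM : M = !![1 - a - b, a, b; c, 1 - c - d, d; e, f, 1 - e - f])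
    (hs : s = a + b + c + d + e + f)
    (hp : p = a*d + a*e + a*f + b*c + b*d + b*f + c*e + c*f + d*e) :
    (M - 1) * (M ^ 2 - (2 - s) • M + (1 - s + p) • 1) = 0 := by
  subst hM hs hp
  ext i j
  fin_cases i <;> fin_cases j <;> simp [sq, Matrix.mul_apply, Fin.sum_univ_three] <;> ring

theorem stmt_14_general (a b c d e f s p x1 x2 : ℝ)
    (M : Matrix (Fin 3) (Fin 3) ℝ)
    (hM : M = !![1 - a - b, a, b; c, 1 - c - d, d; e, f, 1 - e - f])
    (hs : s = a + b + c + d + e + f)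
    (hp : p = a*d + a*e + a*f + b*c + b*d + b*f + c*e + c*f + d*e)
    (hΔ : s ^ 2 - 4 * p > 0)
    (hx1 : x1 = (2 - s - Real.sqrt (s ^ 2 - 4 * p)) / 2)
    (hx2 : x2 = (2 - s + Real.sqrt (s ^ 2 - 4 * p)) / 2)
    (hx1lt : |x1| < 1) (hx2lt : |x2| < 1)
    (PR0 PC0 PT0 : ℝ) :
    Tendsto (fun n : ℕ => ![PR0, PC0, PT0] ᵥ* M ^ n) atTop
      (nhds (![PR0, PC0, PT0] ᵥ* ((1 / p) • (M ^ 2 + (s - 2) • M +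
        (1 - s + p) • (1 : Matrix (Fin 3) (Fin 3) ℝ))))) := by
  have hsqrt : Real.sqrt (s ^ 2 - 4 * p) ^ 2 = s ^ 2 - 4 * p := Real.sq_sqrt hΔ.le
  have hsum : x1 + x2 = 2 - s := by rw [hx1, hx2]; ring
  have hprod : x1 * x2 = 1 - s + p := by rw [hx1, hx2]; linear_combination (-1 / 4 : ℝ) * hsqrt
  have hx12 : x1 ≠ x2 := by
    rw [hx1, hx2]; intro h; linarith [Real.sqrt_pos.mpr hΔ]
  have hx1ne : x1 ≠ 1 := by rintro rfl; norm_num at hx1lt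
  have hx2ne : x2 ≠ 1 := by rintro rfl; norm_num at hx2lt
  have hquad : (M - x1 • 1) * (M - x2 • 1) = M ^ 2 - (2 - s) • M + (1 - s + p) • 1 := by
    rw [sub_smul_one_mul_sub_smul_one, hsum, hprod]
  have hann : (M - 1) * (M - x1 • 1) * (M - x2 • 1) = 0 := by
    rw [mul_assoc, hquad, mutation_matrix_annihilated hM hs hp]
  have hlimit : frobeniusCovariant M 1 x1 x2
      = (1 / p) • (M ^ 2 + (s - 2) • M + (1 - s + p) • (1 : Matrix (Fin 3) (Fin 3) ℝ)) := by
    rw [frobeniusCovariant, hquad, one_div, show (1 - x1) * (1 - x2) = p by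
      linear_combination hprod - hsum, sub_eq_add_neg, ← neg_smul, neg_sub]
  rw [← hlimit]
  have hpow := tendsto_pow_frobeniusCovariant hx1ne hx12 hx2ne (by simpa using hx1lt)
    (by simpa using hx2lt) hann
  exact ((continuous_const.matrix_vecMul continuous_id).tendsto _).comp hpow

theorem stmt_14 (a b c d e f s p x1 x2 : ℝ)
    (M : Matrix (Fin 3) (Fin 3) ℝ)
    (hM : M = !![1 - a - b, a, b; c, 1 - c - d, d; e, f, 1 - e - f])
    (hs : s = a + b + c + d + e + f)
    (hp : p = a*d + a*e + a*f + b*c + b*d + b*f + c*e + c*f + d*e)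
    (hΔ : s ^ 2 - 4 * p > 0)
    (hx1 : x1 = (2 - s - Real.sqrt (s ^ 2 - 4 * p)) / 2)
    (hx2 : x2 = (2 - s + Real.sqrt (s ^ 2 - 4 * p)) / 2)
    (hx1lt : |x1| < 1) (hx2lt : |x2| < 1)
    (PR0 PC0 PT0 : ℝ) (hPR : PR0 ∈ Set.Icc (0:ℝ) 1) (hPC : PC0 ∈ Set.Icc (0:ℝ) 1)
    (hPT : PT0 ∈ Set.Icc (0:ℝ) 1) (hsum : PR0 + PC0 + PT0 = 1) :
    Tendsto (fun n : ℕ => ![PR0, PC0, PT0] ᵥ* M ^ n) atTop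
      (nhds (![PR0, PC0, PT0] ᵥ* ((1 / p) • (M ^ 2 + (s - 2) • M +
        (1 - s + p) • (1 : Matrix (Fin 3) (Fin 3) ℝ))))) :=
  stmt_14_general a b c d e f s p x1 x2 M hM hs hp hΔ hx1 hx2 hx1lt hx2lt PR0 PC0 PT0
end
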